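/- The pentagon graph of the dodecahedron graph is isomorphic to the icosahedron graph. -/

import Mathlib

open SimpleGraph Filter

/-- The 5-cycle graph on `ZMod 5`. -/
def C5 : SimpleGraph (ZMod 5) where
  Adj i j := j = i + 1 ∨ i = j + 1
  symm := ⟨fun i j h => by revert h; revert i j; decide⟩
  loopless := ⟨fun i h => by revert h; revert i; decide⟩

/-- A finset `s` is an induced pentagon (induced 5-cycle) of `G`. -/
def IsPentagon {V : Type*} (G : SimpleGraph V) (s : Finset V) : Prop :=
  s.card = 5 ∧ Nonempty (G.induce (s : Set V) ≃g C5)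

/-- The pentagon graph of `G`: vertices are the induced 5-cycles, adjacency is
sharing an edge. -/
def pentagonGraph {V : Type*} (G : SimpleGraph V) :
    SimpleGraph {s : Finset V // IsPentagon G s} where
  Adj p q := p ≠ q ∧ ∃ a b, G.Adj a b ∧ a ∈ p.1 ∧ b ∈ p.1 ∧ a ∈ q.1 ∧ b ∈ q.1
  symm := ⟨by
    rintro p q ⟨h, a, b, hab, h1, h2, h3, h4⟩
    exact ⟨h.symm, a, b, hab, h3, h4, h1, h2⟩⟩
  loopless := ⟨by rintro p ⟨h, -⟩; exact h rfl⟩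
/-- Edge list of the icosahedron graph (skeleton of the regular icosahedron). -/
def icoEdges : List (Fin 12 × Fin 12) :=
  [(0,1),(0,2),(0,3),(0,4),(0,5),(1,2),(2,3),(3,4),(4,5),(5,1),
   (1,6),(1,7),(2,7),(2,8),(3,8),(3,9),(4,9),(4,10),(5,10),(5,6),
   (6,7),(7,8),(8,9),(9,10),(10,6),(11,6),(11,7),(11,8),(11,9),(11,10)]

/-- The icosahedron graph: the 5-regular graph on 12 vertices given by the
skeleton of the regular icosahedron. -/
def icosahedron : SimpleGraph (Fin 12) where
  Adj a b := (a, b) ∈ icoEdges ∨ (b, a) ∈ icoEdges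
  symm := ⟨fun a b h => by revert h; revert a b; decide⟩
  loopless := ⟨fun a h => by revert h; revert a; decide⟩

instance : DecidableRel icosahedron.Adj :=
  fun a b => inferInstanceAs (Decidable ((a, b) ∈ icoEdges ∨ (b, a) ∈ icoEdges))

/-- Edge list of the dodecahedron graph (skeleton of the regular dodecahedron). -/
def dodEdges : List (Fin 20 × Fin 20) :=
  [(0,1),(1,2),(2,3),(3,4),(4,0),
   (0,5),(1,6),(2,7),(3,8),(4,9),
   (5,10),(6,11),(7,12),(8,13),(9,14),
   (10,6),(11,7),(12,8),(13,9),(14,5),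
   (10,15),(11,16),(12,17),(13,18),(14,19),
   (15,16),(16,17),(17,18),(18,19),(19,15)]

/-- The dodecahedron graph: the 3-regular graph on 20 vertices given by the
skeleton of the regular dodecahedron. -/
def dodecahedron : SimpleGraph (Fin 20) where
  Adj a b := (a, b) ∈ dodEdges ∨ (b, a) ∈ dodEdges
  symm := ⟨fun a b h => by revert h; revert a b; decide⟩
  loopless := ⟨fun a h => by revert h; revert a; decide⟩

/-- The tadpole graph `T_{3,1}`: a triangle `0,1,2` with a pendant vertex `3`
attached to `0`. -/
def tadpole : SimpleGraph (Fin 4) where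
  Adj a b := (a, b) ∈ [((0:Fin 4),(1:Fin 4)),(0,2),(1,2),(0,3)] ∨
             (b, a) ∈ [((0:Fin 4),(1:Fin 4)),(0,2),(1,2),(0,3)]
  symm := ⟨fun a b h => by revert h; revert a b; decide⟩
  loopless := ⟨fun a h => by revert h; revert a; decide⟩

/-!
Every closed walk of length 5 in the dodecahedron runs around one of its twelve faces, as an
enumeration of such walks along the neighbour lists shows. Hence the induced pentagons of the
dodecahedron are exactly its faces, and the pentagon graph is the dual graph: with the faces
labelled as below, two faces share an edge exactly when the corresponding vertices of the
icosahedron are adjacent.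
-/

open Finset

section Pentagon

variable {V : Type*} {G : SimpleGraph V}

theorem isPentagon_image_of_adj_iff [DecidableEq V] {f : ZMod 5 → V} (hf : f.Injective)
    (hadj : ∀ i j, G.Adj (f i) (f j) ↔ C5.Adj i j) : IsPentagon G (univ.image f) := by
  refine ⟨by rw [card_image_of_injective _ hf, card_univ, ZMod.card], ⟨?_⟩⟩
  let e : ZMod 5 ≃ (univ.image f : Set V) :=
    (Equiv.ofInjective f hf).trans (Equiv.setCongr (by simp))
  exact (⟨e, fun {i j} => hadj i j⟩ : C5 ≃g G.induce _).symm

theorem IsPentagon.exists_cycle {s : Finset V} (h : IsPentagon G s) :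
    ∃ f : ZMod 5 → V, (∀ i, G.Adj (f i) (f (i + 1))) ∧ Set.range f = s := by
  obtain ⟨-, ⟨φ⟩⟩ := h
  refine ⟨fun i => φ.symm i, fun i => φ.symm.map_adj_iff.mpr (Or.inl rfl), ?_⟩
  ext x
  constructor
  · rintro ⟨i, rfl⟩
    exact (φ.symm i).2
  · exact fun hx => ⟨φ ⟨x, hx⟩, by simp⟩

theorem nonempty_iso_pentagonGraph {W : Type*} {H : SimpleGraph W} {F : W → Finset V}
    (hF : ∀ w, IsPentagon G (F w)) (hinj : F.Injective)
    (hsurj : ∀ s, IsPentagon G s → ∃ w, F w = s)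
    (hadj : ∀ w w', H.Adj w w' ↔
      w ≠ w' ∧ ∃ a b, G.Adj a b ∧ a ∈ F w ∧ b ∈ F w ∧ a ∈ F w' ∧ b ∈ F w') :
    Nonempty (pentagonGraph G ≃g H) := by
  let e : W ≃ {s // IsPentagon G s} := Equiv.ofBijective (fun w => ⟨F w, hF w⟩)
    ⟨fun w w' h => hinj (congrArg Subtype.val h),
      fun ⟨s, hs⟩ => (hsurj s hs).imp fun w hw => Subtype.ext hw⟩
  refine ⟨(⟨e, fun {w w'} => ?_⟩ : H ≃g pentagonGraph G).symm⟩
  change (pentagonGraph G).Adj ⟨F w, hF w⟩ ⟨F w', hF w'⟩ ↔ H.Adj w w'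
  simp [pentagonGraph, hadj, hinj.ne_iff]

end Pentagon

section Dodecahedron

instance : DecidableRel dodecahedron.Adj :=
  fun a b => inferInstanceAs (Decidable ((a, b) ∈ dodEdges ∨ (b, a) ∈ dodEdges))

instance : DecidableRel C5.Adj :=
  fun i j => inferInstanceAs (Decidable (j = i + 1 ∨ i = j + 1))

/-- The faces of the dodecahedron, each traversed cyclically; face `k` is dual to vertex `k` of
`icosahedron`. -/
def dodecahedronFace : Fin 12 → ZMod 5 → Fin 20 :=
  ![![0, 1, 2, 3, 4], ![0, 1, 6, 10, 5], ![1, 2, 7, 11, 6], ![2, 3, 8, 12, 7],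
    ![3, 4, 9, 13, 8], ![4, 0, 5, 14, 9], ![19, 15, 10, 5, 14], ![15, 16, 11, 6, 10],
    ![16, 17, 12, 7, 11], ![17, 18, 13, 8, 12], ![18, 19, 14, 9, 13], ![15, 16, 17, 18, 19]]

def dodecahedronFaceSet (k : Fin 12) : Finset (Fin 20) :=
  univ.image (dodecahedronFace k)

def dodecahedronNeighbors : Fin 20 → List (Fin 20) :=
  ![[1, 4, 5], [0, 2, 6], [1, 3, 7], [2, 4, 8], [3, 0, 9], [0, 10, 14], [1, 11, 10],
    [2, 12, 11], [3, 13, 12], [4, 14, 13], [5, 6, 15], [6, 7, 16], [7, 8, 17],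
    [8, 9, 18], [9, 5, 19], [10, 16, 19], [11, 15, 17], [12, 16, 18], [13, 17, 19],
    [14, 18, 15]]

theorem dodecahedron_adj_iff_mem_neighbors :
    ∀ a b, dodecahedron.Adj a b ↔ b ∈ dodecahedronNeighbors a := by
  decide

theorem dodecahedronFace_injective : ∀ k, (dodecahedronFace k).Injective := by
  unfold Function.Injective
  decide

theorem dodecahedron_adj_face_iff :
    ∀ k i j, dodecahedron.Adj (dodecahedronFace k i) (dodecahedronFace k j) ↔ C5.Adj i j := by
  decide

theorem isPentagon_dodecahedronFaceSet (k : Fin 12) :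
    IsPentagon dodecahedron (dodecahedronFaceSet k) :=
  isPentagon_image_of_adj_iff (dodecahedronFace_injective k) (dodecahedron_adj_face_iff k)

theorem dodecahedron_closed_walk_mem_face :
    ∀ a, ∀ b ∈ dodecahedronNeighbors a, ∀ c ∈ dodecahedronNeighbors b,
      ∀ d ∈ dodecahedronNeighbors c, ∀ e ∈ dodecahedronNeighbors d,
        a ∈ dodecahedronNeighbors e →
        ∃ k, ∀ x ∈ [a, b, c, d, e], ∃ i, dodecahedronFace k i = x := by
  decide

theorem dodecahedron_cycle_subset_face {f : ZMod 5 → Fin 20}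
    (hf : ∀ i, dodecahedron.Adj (f i) (f (i + 1))) :
    ∃ k, Set.range f ⊆ dodecahedronFaceSet k := by
  simp only [dodecahedron_adj_iff_mem_neighbors] at hf
  obtain ⟨k, hk⟩ := dodecahedron_closed_walk_mem_face
    (f 0) (f 1) (hf 0) (f 2) (hf 1) (f 3) (hf 2) (f 4) (hf 3) (hf 4)
  refine ⟨k, ?_⟩
  rintro _ ⟨i, rfl⟩
  have hi : i = 0 ∨ i = 1 ∨ i = 2 ∨ i = 3 ∨ i = 4 := by revert i; decide
  have hmem : f i ∈ [f 0, f 1, f 2, f 3, f 4] := by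
    rcases hi with rfl | rfl | rfl | rfl | rfl <;> simp
  simpa [dodecahedronFaceSet] using hk (f i) hmem

theorem isPentagon_dodecahedron_iff {s : Finset (Fin 20)} :
    IsPentagon dodecahedron s ↔ ∃ k, dodecahedronFaceSet k = s := by
  refine ⟨fun hs => ?_, fun ⟨k, hk⟩ => hk ▸ isPentagon_dodecahedronFaceSet k⟩
  obtain ⟨f, hf, hrange⟩ := hs.exists_cycle
  obtain ⟨k, hk⟩ := dodecahedron_cycle_subset_face hf
  rw [hrange, coe_subset] at hk
  refine ⟨k, (eq_of_subset_of_card_le hk ?_).symm⟩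
  rw [(isPentagon_dodecahedronFaceSet k).1, hs.1]

theorem dodecahedronFace_exists_not_mem :
    ∀ k l, k ≠ l → ∃ i, ∀ j, dodecahedronFace k i ≠ dodecahedronFace l j := by
  decide

theorem dodecahedronFaceSet_injective : dodecahedronFaceSet.Injective := by
  intro k l hkl
  by_contra hne
  obtain ⟨i, hi⟩ := dodecahedronFace_exists_not_mem k l hne
  have : dodecahedronFace k i ∈ dodecahedronFaceSet l := hkl ▸ mem_image_of_mem _ (mem_univ i)
  obtain ⟨j, -, hj⟩ := mem_image.mp this
  exact hi j hj.symm

theorem icosahedron_adj_iff_dodecahedronFace :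
    ∀ k l, icosahedron.Adj k l ↔ k ≠ l ∧ ∃ i j,
      dodecahedron.Adj (dodecahedronFace k i) (dodecahedronFace k j) ∧
      (∃ i', dodecahedronFace l i' = dodecahedronFace k i) ∧
      (∃ j', dodecahedronFace l j' = dodecahedronFace k j) := by
  decide

theorem icosahedron_adj_iff_dodecahedronFaceSet (k l : Fin 12) :
    icosahedron.Adj k l ↔ k ≠ l ∧ ∃ a b, dodecahedron.Adj a b ∧
      a ∈ dodecahedronFaceSet k ∧ b ∈ dodecahedronFaceSet k ∧ a ∈ dodecahedronFaceSet l ∧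
        b ∈ dodecahedronFaceSet l := by
  simp only [icosahedron_adj_iff_dodecahedronFace, dodecahedronFaceSet, mem_image, mem_univ,
    true_and]
  constructor
  · rintro ⟨hkl, i, j, hij, hi, hj⟩
    exact ⟨hkl, _, _, hij, ⟨i, rfl⟩, ⟨j, rfl⟩, hi, hj⟩
  · rintro ⟨hkl, _, _, hab, ⟨i, rfl⟩, ⟨j, rfl⟩, hi, hj⟩
    exact ⟨hkl, i, j, hab, hi, hj⟩

end Dodecahedron

/-- The pentagon graph of the dodecahedron is isomorphic to the icosahedron. -/
theorem stmt_3 : Nonempty (pentagonGraph dodecahedron ≃g icosahedron) :=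
  nonempty_iso_pentagonGraph isPentagon_dodecahedronFaceSet dodecahedronFaceSet_injective
    (fun _ => isPentagon_dodecahedron_iff.mp) icosahedron_adj_iff_dodecahedronFaceSet
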